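/- Let R be a commutative local ring with maximal ideal m whose residue field k = R/m has characteristic different from 2, and let ρ : R → k be the quotient ring homomorphism. Let n be a natural number and χ a Dirichlet character modulo n with values in R satisfying χ² = 1 (χ is quadratic). Then the conductor of the Dirichlet character obtained by composing χ with ρ (i.e. χ.ringHomComp ρ, with values in k) is equal to the conductor of χ. -/
import Mathlib

/-- In a local ring with residue characteristic ≠ 2, a square root of 1 mapping to 1
in the residue field is 1. -/
lemma sqrt_one_eq_one_of_residue_eq_one {R : Type*} [CommRing R] [IsLocalRing R]
    (hchar : ringChar (IsLocalRing.ResidueField R) ≠ 2)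
    {x : R} (hx : x ^ 2 = 1) (hρ : IsLocalRing.residue R x = 1) : x = 1 := by
  have h2 : (2 : IsLocalRing.ResidueField R) ≠ 0 := by
    intro h
    have hdvd : ringChar (IsLocalRing.ResidueField R) ∣ 2 :=
      (ringChar.spec _ 2).mp (by exact_mod_cast h)
    rcases (Nat.dvd_prime Nat.prime_two).mp hdvd with h1 | h2
    · haveI := ringChar.charP (IsLocalRing.ResidueField R)
      exact CharP.char_ne_one (IsLocalRing.ResidueField R)
        (ringChar (IsLocalRing.ResidueField R)) h1
    · exact hchar h2
  have hmul : (x - 1) * (x + 1) = 0 := by linear_combination hx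
  have hxm : x - 1 ∈ IsLocalRing.maximalIdeal R := by
    have : IsLocalRing.residue R (x - 1) = 0 := by
      rw [map_sub, hρ, map_one, sub_self]
    exact (IsLocalRing.residue_eq_zero_iff _).mp this
  have hunit : IsUnit (x + 1) := by
    by_contra hnu
    have hxp : x + 1 ∈ IsLocalRing.maximalIdeal R := hnu
    have h2m : (2 : R) ∈ IsLocalRing.maximalIdeal R := by
      have h := Ideal.sub_mem _ hxp hxm
      rwa [show x + 1 - (x - 1) = 2 by ring] at h
    have hres : IsLocalRing.residue R (2 : R) = 0 :=
      (IsLocalRing.residue_eq_zero_iff _).mpr h2m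
    rw [map_ofNat] at hres
    exact h2 hres
  have : x - 1 = 0 := (hunit.mul_left_eq_zero).mp hmul
  exact sub_eq_zero.mp this

/-- Let `R` be a commutative local ring with maximal ideal `m` whose residue
field `k = R/m` has characteristic different from `2`, and let `ρ : R → k` be the quotient map.
If `χ` is a quadratic Dirichlet character modulo `n` with values in `R` (i.e. `χ² = 1`), then the
conductor of the residual character `χ.ringHomComp ρ` equals the conductor of `χ`. -/
theorem conductor_ringHomComp_residue_eq_of_quadratic
    {R : Type*} [CommRing R] [IsLocalRing R]
    (hchar : ringChar (IsLocalRing.ResidueField R) ≠ 2)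
    {n : ℕ} (χ : DirichletCharacter R n) (hχ : χ ^ 2 = 1) :
    DirichletCharacter.conductor (χ.ringHomComp (IsLocalRing.residue R)) =
      DirichletCharacter.conductor χ := by
  rcases eq_or_ne n 0 with rfl | hn
  · rw [DirichletCharacter.conductor_eq_zero_iff_level_eq_zero.mpr rfl,
      DirichletCharacter.conductor_eq_zero_iff_level_eq_zero.mpr rfl]
  · have : NeZero n := ⟨hn⟩
    have hker : ∀ u : (ZMod n)ˣ,
        u ∈ (χ.ringHomComp (IsLocalRing.residue R)).toUnitHom.ker ↔
          u ∈ χ.toUnitHom.ker := by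
      intro u
      simp only [MonoidHom.mem_ker, ← Units.val_eq_one, MulChar.coe_toUnitHom,
        MulChar.ringHomComp_apply]
      constructor
      · intro h
        have hsq : χ (u : ZMod n) ^ 2 = 1 := by
          have h1 : (χ ^ 2) (u : ZMod n) = 1 := by
            rw [hχ]; exact MulChar.one_apply_coe u
          rwa [MulChar.pow_apply' χ two_ne_zero] at h1
        exact sqrt_one_eq_one_of_residue_eq_one hchar hsq h
      · intro h
        rw [h, map_one]
    have hsets : DirichletCharacter.conductorSet (χ.ringHomComp (IsLocalRing.residue R)) =
        DirichletCharacter.conductorSet χ := by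
      ext d
      simp only [DirichletCharacter.mem_conductorSet_iff]
      constructor
      · intro hd
        have hdvd := hd.dvd
        rw [DirichletCharacter.factorsThrough_iff_ker_unitsMap hdvd] at hd ⊢
        intro u hu
        exact (hker u).mp (hd hu)
      · intro hd
        have hdvd := hd.dvd
        rw [DirichletCharacter.factorsThrough_iff_ker_unitsMap hdvd] at hd ⊢
        intro u hu
        exact (hker u).mpr (hd hu)
    unfold DirichletCharacter.conductor
    rw [hsets]
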